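/- arXiv:math/0610594 — 3 statements merged into one kernel-verified Lean document; each statement's English description precedes it below -/
import Mathlib

section
/- Let C and C' be k-linear triangulated categories that are d-Calabi-Yau (d ≥ 2), with d-cluster tilting subcategories T ⊂ C and T' ⊂ C'. If F : C → C' is a triangle functor taking T into T', then F is an equivalence if and only if the restriction of F to T is an equivalence onto T'. -/
open CategoryTheory Limits Pretriangulated

universe v u

/-- A `d`-Calabi-Yau structure: bifunctorial isomorphisms `D C(X,Y) ≅ C(Y, X⟦d⟧)`. -/
structure CalabiYau (k : Type u) [Field k] (C : Type u) [Category.{v} C] [Preadditive C]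
    [Linear k C] [HasShift C ℤ] (d : ℤ) where
  equiv : ∀ X Y : C, Module.Dual k (X ⟶ Y) ≃ₗ[k] (Y ⟶ X⟦d⟧)
  nat_right : ∀ (X Y Y' : C) (g : Y ⟶ Y') (φ : Module.Dual k (X ⟶ Y')),
      g ≫ equiv X Y' φ = equiv X Y (φ.comp (Linear.rightComp k X g))

/-- `T` is a `d`-cluster tilting subcategory: functorially finite, and
`X ∈ T` iff `Ext^i(t, X) = 0` for all `t ∈ T`, `1 ≤ i ≤ d-1`. -/
structure IsClusterTilting (C : Type u) [Category.{v} C] [Preadditive C] [HasShift C ℤ] (d : ℤ)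
    (T : Set C) : Prop where
  right_approx : ∀ X : C, ∃ t, t ∈ T ∧ ∃ f : t ⟶ X,
    ∀ t', t' ∈ T → ∀ g : t' ⟶ X, ∃ h : t' ⟶ t, h ≫ f = g
  left_approx : ∀ X : C, ∃ t, t ∈ T ∧ ∃ f : X ⟶ t,
    ∀ t', t' ∈ T → ∀ g : X ⟶ t', ∃ h : t ⟶ t', f ≫ h = g
  mem_iff : ∀ X : C, X ∈ T ↔
    ∀ t, t ∈ T → ∀ i : ℤ, 1 ≤ i → i ≤ d - 1 → ∀ f : t ⟶ X⟦i⟧, f = 0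

namespace CYProofAux

set_option linter.unusedSectionVars false

section OneCat

variable {C : Type u} [Category.{v} C] [Preadditive C] [HasShift C ℤ]
  [∀ n : ℤ, (shiftFunctor C n).Additive] [HasZeroObject C] [Pretriangulated C]

/-- All maps from `t` to `B` vanish. -/
def ZHom (t B : C) : Prop := ∀ f : t ⟶ B, f = 0

lemma zhom_of_iso {t B B' : C} (e : B ≅ B') (h : ZHom t B) : ZHom t B' := fun f => by
  have h1 : f ≫ e.inv = 0 := h _
  have h2 : (f ≫ e.inv) ≫ e.hom = f := by simp
  rw [← h2, h1, zero_comp]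

/-- convenient iso `X⟦a⟧⟦b⟧ ≅ X⟦c⟧` -/
noncomputable def shIso (a b c : ℤ) (h : a + b = c) (X : C) : X⟦a⟧⟦b⟧ ≅ X⟦c⟧ :=
  ((shiftFunctorAdd' C a b c h).symm.app X)

variable (T : Set C) (d : ℤ)

/-- vanishing of `Ext^i(T, X)` for `1 ≤ i ≤ k` -/
def Van (k : ℤ) (X : C) : Prop := ∀ t ∈ T, ∀ i : ℤ, 1 ≤ i → i ≤ k → ZHom t (X⟦i⟧)

/-- `X ∈ T * T⟦1⟧ * ⋯ * T⟦n⟧` (tower of extensions by shifted `T`-objects). -/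
def Tower : ℕ → C → Prop
  | 0, X => X ∈ T
  | (n+1), X => Tower n X ∨ ∃ (t Z : C) (a : t ⟶ X) (b : X ⟶ Z⟦(1:ℤ)⟧)
      (c : Z⟦(1:ℤ)⟧ ⟶ t⟦(1:ℤ)⟧), t ∈ T ∧ Tower n Z ∧ Triangle.mk a b c ∈ distTriang C

variable {T} {d}

lemma tower_step (hT : IsClusterTilting C d T) (hd : 2 ≤ d) {k : ℤ}
    (hk : k ≤ d - 2) (X : C) (hX : Van T k X) :
    ∃ (t Z : C) (a : t ⟶ X) (b : X ⟶ Z⟦(1:ℤ)⟧)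
      (c : Z⟦(1:ℤ)⟧ ⟶ t⟦(1:ℤ)⟧), t ∈ T ∧ Van T (k+1) Z ∧ Triangle.mk a b c ∈ distTriang C := by
  obtain ⟨t₀, ht₀, f, hf⟩ := hT.right_approx X
  obtain ⟨W, g, h, hTr⟩ := Pretriangulated.distinguished_cocone_triangle f
  set Z : C := W⟦(-1:ℤ)⟧ with hZdef
  set e : Z⟦(1:ℤ)⟧ ≅ W := (shiftFunctorCompIsoId C (-1) 1 (by omega)).app W with he
  have hTr' : Triangle.mk f (g ≫ e.inv) (e.hom ≫ h) ∈ distTriang C := by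
    refine isomorphic_distinguished _ hTr _ ?_
    exact Triangle.isoMk _ _ (Iso.refl _) (Iso.refl _) e (by dsimp only [Triangle.mk]; simp)
      (by dsimp only [Triangle.mk]; simp [he]) (by dsimp only [Triangle.mk]; simp)
  have hW : ∀ t ∈ T, ∀ j : ℤ, 0 ≤ j → j ≤ k → ZHom t (W⟦j⟧) := by
    intro t ht j hj0 hjk
    rcases eq_or_lt_of_le hj0 with hj | hj
    · -- j = 0 : the approximation property kills the maps
      have hW' : ZHom t W := by
        intro u
        have hu : u ≫ h = 0 := (hT.mem_iff _).1 ht₀ t ht 1 le_rfl (by omega) _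
        obtain ⟨v, hv⟩ := Triangle.coyoneda_exact₃ _ hTr u hu
        obtain ⟨w, hw⟩ := hf t ht v
        have h12 : f ≫ g = 0 := comp_distTriang_mor_zero₁₂ _ hTr
        erw [hv, ← hw, Category.assoc]
        show w ≫ (f ≫ g) = 0
        rw [h12, comp_zero]
      rw [← hj]
      exact zhom_of_iso ((shiftFunctorZero C ℤ).app W).symm hW'
    · -- 1 ≤ j : use the shifted triangle
      intro u
      have hTrS := Triangle.shift_distinguished _ hTr j
      have hz : ZHom t ((t₀⟦j⟧)⟦(1:ℤ)⟧) :=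
        zhom_of_iso (shIso j 1 (j+1) rfl t₀).symm
          ((hT.mem_iff _).1 ht₀ t ht (j+1) (by omega) (by omega))
      have hu : u ≫ ((CategoryTheory.shiftFunctor (Triangle C) j).obj
          (Triangle.mk f g h)).mor₃ = 0 := hz _
      obtain ⟨v, hv⟩ := Triangle.coyoneda_exact₃ _ hTrS u hu
      have hv0 : v = 0 := hX t ht j (by omega) hjk v
      rw [hv, hv0, zero_comp]
      rfl
  refine ⟨t₀, Z, f, g ≫ e.inv, e.hom ≫ h, ht₀, ?_, hTr'⟩
  intro t ht i hi1 hik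
  exact zhom_of_iso (shIso (-1) i (i-1) (by ring) W).symm
    (hW t ht (i-1) (by omega) (by omega))

lemma tower_of_van (hT : IsClusterTilting C d T) (hd : 2 ≤ d) :
    ∀ (n : ℕ), (n : ℤ) ≤ d - 1 → ∀ (X : C), Van T (d-1-n) X → Tower T n X := by
  intro n
  induction n with
  | zero =>
    intro _ X hX
    apply (hT.mem_iff X).2
    intro t ht i h1 h2 u
    exact hX t ht i h1 (by push_cast; omega) u
  | succ n ih =>
    intro hn X hX
    obtain ⟨t, Z, a, b, c, ht, hZ, hTr⟩ :=
      tower_step hT hd (k := d - 1 - (n+1 : ℕ)) (by push_cast; omega) X hX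
    refine Or.inr ⟨t, Z, a, b, c, ht, ih (by push_cast at hn ⊢; omega) Z ?_, hTr⟩
    intro t' ht' i h1 h2 u
    exact hZ t' ht' i h1 (by push_cast at h2 ⊢; omega) u

lemma tower_total (hT : IsClusterTilting C d T) (hd : 2 ≤ d) (X : C) :
    Tower T (d-1).toNat X := by
  apply tower_of_van hT hd _ (by rw [Int.toNat_of_nonneg (by omega)])
  intro t ht i h1 h2 u
  exfalso
  rw [Int.toNat_of_nonneg (by omega)] at h2
  omega

end OneCat

section TwoCat

variable {C : Type u} {D : Type u} [Category.{v} C] [Category.{v} D]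

/-- `F` induces a bijection on homs from `X` to `Y`. -/
def Bij (F : C ⥤ D) (X Y : C) : Prop :=
  Function.Bijective (F.map : (X ⟶ Y) → (F.obj X ⟶ F.obj Y))

variable (F : C ⥤ D)

lemma bij_of_iso_right {X Y Y' : C} (e : Y ≅ Y') (h : Bij F X Y) : Bij F X Y' := by
  constructor
  · intro f g hfg
    have h1 : F.map (f ≫ e.inv) = F.map (g ≫ e.inv) := by
      simp only [F.map_comp]; rw [show F.map f = F.map g from hfg]
    have h2 := h.1 h1
    have h3 : (f ≫ e.inv) ≫ e.hom = (g ≫ e.inv) ≫ e.hom := by rw [h2]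
    simpa using h3
  · intro u
    obtain ⟨g, hg⟩ := h.2 (u ≫ F.map e.inv)
    refine ⟨g ≫ e.hom, ?_⟩
    simp only [F.map_comp, hg]
    simp [← F.map_comp]

lemma bij_of_iso_left {X X' Y : C} (e : X ≅ X') (h : Bij F X Y) : Bij F X' Y := by
  constructor
  · intro f g hfg
    have h1 : F.map (e.hom ≫ f) = F.map (e.hom ≫ g) := by
      simp only [F.map_comp]; rw [show F.map f = F.map g from hfg]
    have h2 := h.1 h1
    have h3 : e.inv ≫ (e.hom ≫ f) = e.inv ≫ (e.hom ≫ g) := by rw [h2]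
    simpa using h3
  · intro u
    obtain ⟨g, hg⟩ := h.2 (F.map e.hom ≫ u)
    refine ⟨e.inv ≫ g, ?_⟩
    simp only [F.map_comp, hg]
    simp [← F.map_comp]

lemma bij_zero [Preadditive C] [Preadditive D] [F.PreservesZeroMorphisms]
    {X Y : C} (h : ZHom X Y) (h' : ZHom (F.obj X) (F.obj Y)) : Bij F X Y := by
  constructor
  · intro f g _
    rw [h f, h g]
  · intro u
    exact ⟨0, by rw [F.map_zero]; exact (h' u).symm⟩

section WithShift
variable [HasShift C ℤ] [HasShift D ℤ] [F.CommShift ℤ]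

lemma bij_shift (n : ℤ) (X Y : C) (h : Bij F X (Y⟦-n⟧)) : Bij F (X⟦n⟧) Y := by
  have hadd : n + -n = 0 := by omega
  set e := shiftFunctorCompIsoId C n (-n) hadd with he
  set e' := shiftFunctorCompIsoId D n (-n) hadd with he'
  have key : ∀ f : X⟦n⟧ ⟶ Y,
      F.map (e.inv.app X ≫ f⟦(-n : ℤ)⟧') =
        e'.inv.app (F.obj X) ≫ ((F.commShiftIso n).inv.app X)⟦(-n : ℤ)⟧' ≫
          (F.map f)⟦(-n : ℤ)⟧' ≫ (F.commShiftIso (-n)).inv.app Y := by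
    intro f
    rw [F.map_comp, Functor.map_shiftFunctorCompIsoId_inv_app]
    have nat := (F.commShiftIso (-n)).inv.naturality f
    dsimp at nat
    simp only [Category.assoc]
    rw [← nat]
  have inj' : ∀ a b : F.obj (X⟦n⟧) ⟶ F.obj Y,
      e'.inv.app (F.obj X) ≫ ((F.commShiftIso n).inv.app X)⟦(-n : ℤ)⟧' ≫
          a⟦(-n : ℤ)⟧' ≫ (F.commShiftIso (-n)).inv.app Y =
        e'.inv.app (F.obj X) ≫ ((F.commShiftIso n).inv.app X)⟦(-n : ℤ)⟧' ≫
          b⟦(-n : ℤ)⟧' ≫ (F.commShiftIso (-n)).inv.app Y → a = b := by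
    intro a b hab
    rw [cancel_epi] at hab
    simp only [← Category.assoc] at hab
    rw [cancel_mono] at hab
    rw [← Functor.map_comp, ← Functor.map_comp] at hab
    have := (shiftFunctor D (-n)).map_injective hab
    rwa [cancel_epi] at this
  constructor
  · intro f g hfg
    have h1 : F.map (e.inv.app X ≫ f⟦(-n : ℤ)⟧') = F.map (e.inv.app X ≫ g⟦(-n : ℤ)⟧') := by
      rw [key, key]
      simp only [show F.map f = F.map g from hfg]
    have h2 := h.1 h1
    have h3 : f⟦(-n : ℤ)⟧' = g⟦(-n : ℤ)⟧' := by
      rwa [cancel_epi] at h2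
    exact (shiftFunctor C (-n)).map_injective h3
  · intro u
    obtain ⟨p, hp⟩ := h.2 (e'.inv.app (F.obj X) ≫ ((F.commShiftIso n).inv.app X)⟦(-n : ℤ)⟧' ≫
      u⟦(-n : ℤ)⟧' ≫ (F.commShiftIso (-n)).inv.app Y)
    obtain ⟨f, hf⟩ := (shiftFunctor C (-n)).map_surjective (e.hom.app X ≫ p)
    refine ⟨f, ?_⟩
    apply inj'
    rw [← key]
    simp only [hf]
    have h4 : e.inv.app X ≫ e.hom.app X ≫ p = p := by
      rw [← Category.assoc]
      simp
    rw [h4]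
    exact hp

end WithShift

section Chase
variable [Preadditive C] [Preadditive D] [HasShift C ℤ] [HasShift D ℤ]
  [∀ n : ℤ, (shiftFunctor C n).Additive] [∀ n : ℤ, (shiftFunctor D n).Additive]
  [HasZeroObject C] [HasZeroObject D] [Pretriangulated C] [Pretriangulated D]
  [F.CommShift ℤ] [F.IsTriangulated]

lemma bij_of_ker {X Y : C} (hker : ∀ u : X ⟶ Y, F.map u = 0 → u = 0)
    (hsurj : Function.Surjective (F.map : (X ⟶ Y) → (F.obj X ⟶ F.obj Y))) : Bij F X Y := by
  refine ⟨fun f g hfg => ?_, hsurj⟩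
  have h1 : F.map (f - g) = 0 := by
    rw [F.map_sub]
    rw [show F.map f = F.map g from hfg, sub_self]
  have h2 := hker _ h1
  rwa [sub_eq_zero] at h2

lemma bij_obj₂_cov (Tr : Triangle C) (hTr : Tr ∈ distTriang C) (t : C)
    (h1 : Bij F t Tr.obj₁) (h3 : Bij F t Tr.obj₃)
    (h1s : Bij F t (Tr.obj₁⟦(1 : ℤ)⟧)) (h3s : Bij F t (Tr.obj₃⟦(-1 : ℤ)⟧)) :
    Bij F t Tr.obj₂ := by
  have hTr' : Tr.invRotate ∈ distTriang C := inv_rot_of_distTriang Tr hTr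
  apply bij_of_ker
  · intro u hu
    have h2 : u ≫ Tr.mor₂ = 0 := by
      apply h3.1
      show F.map (u ≫ Tr.mor₂) = F.map 0
      rw [F.map_comp, hu, zero_comp, F.map_zero]
    obtain ⟨v, hv⟩ := Triangle.coyoneda_exact₂ Tr hTr u h2
    have hv2 : F.map v ≫ (F.mapTriangle.obj Tr.invRotate).mor₂ = 0 := by
      show F.map v ≫ F.map Tr.invRotate.mor₂ = 0
      erw [← F.map_comp]
      show F.map (v ≫ Tr.mor₁) = 0
      rw [← hv, hu]
    obtain ⟨w', hw'⟩ := Triangle.coyoneda_exact₂ _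
      (F.map_distinguished _ hTr') (F.map v) hv2
    obtain ⟨w, hw⟩ := h3s.2 w'
    have hveq : v = w ≫ Tr.invRotate.mor₁ := by
      apply h1.1
      show F.map v = F.map (w ≫ Tr.invRotate.mor₁)
      erw [F.map_comp, hw']
      congr 1
      exact hw.symm
    have hzero : Tr.invRotate.mor₁ ≫ Tr.mor₁ = 0 :=
      comp_distTriang_mor_zero₁₂ _ hTr'
    erw [hv, hveq, Category.assoc, hzero, comp_zero]
  · intro u'
    obtain ⟨p, hp⟩ := h3.2 (u' ≫ F.map Tr.mor₂)
    have hp3 : p ≫ Tr.mor₃ = 0 := by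
      apply h1s.1
      show F.map (p ≫ Tr.mor₃) = F.map 0
      rw [F.map_comp, F.map_zero, hp, Category.assoc, ← F.map_comp,
        comp_distTriang_mor_zero₂₃ Tr hTr, F.map_zero, comp_zero]
    obtain ⟨v, hv⟩ := Triangle.coyoneda_exact₃ Tr hTr p hp3
    have hδ : (F.map v - u') ≫ (F.mapTriangle.obj Tr).mor₂ = 0 := by
      show (F.map v - u') ≫ F.map Tr.mor₂ = 0
      rw [Preadditive.sub_comp, ← F.map_comp, ← hv, hp, sub_self]
    obtain ⟨w', hw'⟩ := Triangle.coyoneda_exact₂ _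
      (F.map_distinguished _ hTr) (F.map v - u') hδ
    obtain ⟨w, hw⟩ := h1.2 w'
    refine ⟨v - w ≫ Tr.mor₁, ?_⟩
    show F.map (v - w ≫ Tr.mor₁) = u'
    rw [F.map_sub, F.map_comp, hw]
    have h5 : w' ≫ (F.mapTriangle.obj Tr).mor₁ = w' ≫ F.map Tr.mor₁ := rfl
    erw [← h5, ← hw']
    abel

lemma bij_obj₂_contra (Tr : Triangle C) (hTr : Tr ∈ distTriang C) (Y : C)
    (h1 : Bij F Tr.obj₁ Y) (h3 : Bij F Tr.obj₃ Y)
    (h1s : Bij F (Tr.obj₁⟦(1 : ℤ)⟧) Y) (h3s : Bij F (Tr.obj₃⟦(-1 : ℤ)⟧) Y) :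
    Bij F Tr.obj₂ Y := by
  have hTr' : Tr.invRotate ∈ distTriang C := inv_rot_of_distTriang Tr hTr
  apply bij_of_ker
  · intro u hu
    have h2 : Tr.mor₁ ≫ u = 0 := by
      apply h1.1
      show F.map (Tr.mor₁ ≫ u) = F.map 0
      rw [F.map_comp, hu, comp_zero, F.map_zero]
    obtain ⟨v, hv⟩ := Triangle.yoneda_exact₂ Tr hTr u h2
    have hv2 : (F.mapTriangle.obj Tr).mor₂ ≫ F.map v = 0 := by
      show F.map Tr.mor₂ ≫ F.map v = 0
      rw [← F.map_comp, ← hv, hu]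
    obtain ⟨w', hw'⟩ := Triangle.yoneda_exact₃ _
      (F.map_distinguished _ hTr) (F.map v) hv2
    obtain ⟨w, hw⟩ := h1s.2 ((F.commShiftIso (1 : ℤ)).hom.app Tr.obj₁ ≫ w')
    have hveq : v = Tr.mor₃ ≫ w := by
      apply h3.1
      show F.map v = F.map (Tr.mor₃ ≫ w)
      rw [F.map_comp, hw, hw']
      show (F.mapTriangle.obj Tr).mor₃ ≫ w' =
        F.map Tr.mor₃ ≫ (F.commShiftIso (1 : ℤ)).hom.app Tr.obj₁ ≫ w'
      exact Category.assoc (F.map Tr.mor₃) ((F.commShiftIso (1 : ℤ)).hom.app Tr.obj₁) w'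
    rw [hv, hveq, ← Category.assoc, comp_distTriang_mor_zero₂₃ Tr hTr, zero_comp]
  · intro u'
    obtain ⟨p, hp⟩ := h1.2 (F.map Tr.mor₁ ≫ u')
    have hp3 : Tr.invRotate.mor₁ ≫ p = 0 := by
      apply h3s.1
      show F.map (Tr.invRotate.mor₁ ≫ p) = F.map 0
      erw [F.map_comp, F.map_zero, hp, ← Category.assoc, ← F.map_comp]
      have h6 : Tr.invRotate.mor₁ ≫ Tr.mor₁ = 0 := comp_distTriang_mor_zero₁₂ _ hTr'
      rw [h6, F.map_zero, zero_comp]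
    obtain ⟨v₀, hv₀⟩ := Triangle.yoneda_exact₂ _ hTr' p hp3
    have hv : p = Tr.mor₁ ≫ (v₀ : Tr.obj₂ ⟶ Y) := hv₀
    set v : Tr.obj₂ ⟶ Y := v₀ with hvdef
    have hδ : (F.mapTriangle.obj Tr).mor₁ ≫ (u' - F.map v) = 0 := by
      show F.map Tr.mor₁ ≫ (u' - F.map v) = 0
      rw [Preadditive.comp_sub, ← hp, ← F.map_comp, ← hv, sub_self]
    obtain ⟨w', hw'⟩ := Triangle.yoneda_exact₂ _
      (F.map_distinguished _ hTr) (u' - F.map v) hδ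
    obtain ⟨w, hw⟩ := h3.2 w'
    refine ⟨v + Tr.mor₂ ≫ w, ?_⟩
    show F.map (v + Tr.mor₂ ≫ w) = u'
    rw [F.map_add, F.map_comp, hw]
    have h7 : (F.mapTriangle.obj Tr).mor₂ ≫ w' = F.map Tr.mor₂ ≫ w' := rfl
    rw [← h7, ← hw']
    abel

end Chase

end TwoCat

section Main
variable {C D : Type u} [Category.{v} C] [Category.{v} D]
  [Preadditive C] [Preadditive D] [HasShift C ℤ] [HasShift D ℤ]
  [∀ n : ℤ, (shiftFunctor C n).Additive] [∀ n : ℤ, (shiftFunctor D n).Additive]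
  [HasZeroObject C] [HasZeroObject D] [Pretriangulated C] [Pretriangulated D]
  {T : Set C} {T' : Set D} {d : ℤ}
  (F : C ⥤ D) [F.CommShift ℤ] [F.IsTriangulated]

lemma bij_base (hT : IsClusterTilting C d T) (hT' : IsClusterTilting D d T') (hd : 2 ≤ d)
    (hF : ∀ X ∈ T, F.obj X ∈ T') (hbase : ∀ t ∈ T, ∀ t' ∈ T, Bij F t t') :
    ∀ t ∈ T, ∀ t' ∈ T, ∀ j : ℤ, 0 ≤ j → j ≤ d - 1 → Bij F t (t'⟦j⟧) := by
  intro t ht t' ht' j hj0 hjd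
  rcases eq_or_lt_of_le hj0 with hj | hj
  · rw [← hj]
    exact bij_of_iso_right F ((shiftFunctorZero C ℤ).app t').symm (hbase t ht t' ht')
  · apply bij_zero
    · exact (hT.mem_iff _).1 ht' t ht j (by omega) hjd
    · exact zhom_of_iso ((F.commShiftIso j).app t').symm
        ((hT'.mem_iff _).1 (hF t' ht') _ (hF t ht) j (by omega) hjd)

lemma bij_left (hT : IsClusterTilting C d T) (hT' : IsClusterTilting D d T') (hd : 2 ≤ d)
    (hF : ∀ X ∈ T, F.obj X ∈ T') (hbase : ∀ t ∈ T, ∀ t' ∈ T, Bij F t t') :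
    ∀ (n : ℕ) (Y : C), Tower T n Y → ∀ t ∈ T, ∀ j : ℤ, 0 ≤ j → j + n ≤ d - 1 →
      Bij F t (Y⟦j⟧) := by
  intro n
  induction n with
  | zero =>
    intro Y hY t ht j hj0 hjd
    exact bij_base F hT hT' hd hF hbase t ht Y hY j hj0 (by push_cast at hjd; omega)
  | succ n ih =>
    intro Y hY t ht j hj0 hjd
    rcases hY with hY | ⟨t₀, Z, a, b, c, ht₀, hZ, hTr⟩
    · exact ih Y hY t ht j hj0 (by push_cast at hjd ⊢; omega)
    · have hTrS := Triangle.shift_distinguished _ hTr j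
      have h1 : Bij F t (t₀⟦j⟧) :=
        bij_base F hT hT' hd hF hbase t ht t₀ ht₀ j hj0 (by push_cast at hjd; omega)
      have h3 : Bij F t ((Z⟦(1:ℤ)⟧)⟦j⟧) := by
        refine bij_of_iso_right F (shIso 1 j (1+j) rfl Z).symm ?_
        exact ih Z hZ t ht (1+j) (by omega) (by push_cast at hjd ⊢; omega)
      have h1s : Bij F t ((t₀⟦j⟧)⟦(1:ℤ)⟧) := by
        refine bij_of_iso_right F (shIso j 1 (j+1) rfl t₀).symm ?_
        exact bij_base F hT hT' hd hF hbase t ht t₀ ht₀ (j+1) (by omega)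
          (by push_cast at hjd; omega)
      have h3s : Bij F t (((Z⟦(1:ℤ)⟧)⟦j⟧)⟦(-1:ℤ)⟧) := by
        refine bij_of_iso_right F
          (((shiftFunctor C (-1:ℤ)).mapIso (shIso 1 j (1+j) rfl Z) ≪≫
            shIso (1+j) (-1) j (by ring) Z).symm) ?_
        exact ih Z hZ t ht j hj0 (by push_cast at hjd ⊢; omega)
      exact bij_obj₂_cov F _ hTrS t h1 h3 h1s h3s

lemma bij_left_all (hT : IsClusterTilting C d T) (hT' : IsClusterTilting D d T') (hd : 2 ≤ d)
    (hF : ∀ X ∈ T, F.obj X ∈ T') (hbase : ∀ t ∈ T, ∀ t' ∈ T, Bij F t t') :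
    ∀ t ∈ T, ∀ Y : C, Bij F t Y := by
  intro t ht Y
  have h0 := bij_left F hT hT' hd hF hbase (d-1).toNat Y (tower_total hT hd Y) t ht 0 le_rfl
    (by rw [Int.toNat_of_nonneg (by omega)]; omega)
  exact bij_of_iso_right F ((shiftFunctorZero C ℤ).app Y) h0

lemma bij_all (hT : IsClusterTilting C d T) (hT' : IsClusterTilting D d T') (hd : 2 ≤ d)
    (hF : ∀ X ∈ T, F.obj X ∈ T') (hbase : ∀ t ∈ T, ∀ t' ∈ T, Bij F t t') :
    ∀ (n : ℕ) (X : C), Tower T n X → ∀ Y : C, Bij F X Y := by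
  intro n
  induction n with
  | zero =>
    intro X hX Y
    exact bij_left_all F hT hT' hd hF hbase X hX Y
  | succ n ih =>
    intro X hX Y
    rcases hX with hX | ⟨t₀, Z, a, b, c, ht₀, hZ, hTr⟩
    · exact ih X hX Y
    · have g1 : Bij F t₀ Y := bij_left_all F hT hT' hd hF hbase t₀ ht₀ Y
      have g3 : Bij F (Z⟦(1:ℤ)⟧) Y := bij_shift F 1 Z Y (ih Z hZ _)
      have g1s : Bij F (t₀⟦(1:ℤ)⟧) Y :=
        bij_shift F 1 t₀ Y (bij_left_all F hT hT' hd hF hbase t₀ ht₀ _)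
      have g3s : Bij F ((Z⟦(1:ℤ)⟧)⟦(-1:ℤ)⟧) Y := by
        apply bij_shift F (-1) (Z⟦(1:ℤ)⟧) Y
        have h8 : Bij F (Z⟦(1:ℤ)⟧) (Y⟦(1:ℤ)⟧) := bij_shift F 1 Z _ (ih Z hZ _)
        rw [show (-(-1) : ℤ) = 1 by norm_num]
        exact h8
      exact bij_obj₂_contra F (Triangle.mk a b c) hTr Y g1 g3 g1s g3s

lemma ess_surj_aux (hd : 2 ≤ d) [F.Full]
    (hbase : ∀ X' ∈ T', ∃ W : C, Nonempty (F.obj W ≅ X')) :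
    ∀ (n : ℕ) (X' : D), Tower T' n X' → ∃ W : C, Nonempty (F.obj W ≅ X') := by
  intro n
  induction n with
  | zero => intro X' hX'; exact hbase X' hX'
  | succ n ih =>
    intro X' hX'
    rcases hX' with hX' | ⟨t', Z', a', b', c', ht', hZ', hTr'⟩
    · exact ih X' hX'
    · obtain ⟨aW, ⟨e₁⟩⟩ := hbase t' ht'
      obtain ⟨zW, ⟨e₃⟩⟩ := ih Z' hZ'
      set φ : F.obj (zW⟦(1:ℤ)⟧) ≅ Z'⟦(1:ℤ)⟧ :=
        (F.commShiftIso (1:ℤ)).app zW ≪≫ (shiftFunctor D (1:ℤ)).mapIso e₃ with hφ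
      set ψ : F.obj (aW⟦(1:ℤ)⟧) ≅ t'⟦(1:ℤ)⟧ :=
        (F.commShiftIso (1:ℤ)).app aW ≪≫ (shiftFunctor D (1:ℤ)).mapIso e₁ with hψ
      set m : zW⟦(1:ℤ)⟧ ⟶ aW⟦(1:ℤ)⟧ := F.preimage (φ.hom ≫ c' ≫ ψ.inv) with hm
      obtain ⟨Q, q₂, q₃, hQ⟩ := Pretriangulated.distinguished_cocone_triangle m
      have hrot : ((Triangle.mk a' b' c').rotate.rotate) ∈ distTriang D :=
        rot_of_distTriang _ (rot_of_distTriang _ hTr')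
      have hcomm : (F.mapTriangle.obj (Triangle.mk m q₂ q₃)).mor₁ ≫ ψ.hom =
          φ.hom ≫ ((Triangle.mk a' b' c').rotate.rotate).mor₁ := by
        show F.map m ≫ ψ.hom = φ.hom ≫ c'
        rw [hm, F.map_preimage]
        simp
      have hiso := isoTriangleOfIso₁₂ _ _
        (F.map_distinguished _ hQ) hrot φ ψ hcomm
      have e3' : F.obj Q ≅ X'⟦(1:ℤ)⟧ := Triangle.π₃.mapIso hiso
      refine ⟨Q⟦(-1:ℤ)⟧, ⟨?_⟩⟩
      exact (F.commShiftIso (-1:ℤ)).app Q ≪≫ (shiftFunctor D (-1:ℤ)).mapIso e3' ≪≫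
        (shIso 1 (-1) 0 (by ring) X') ≪≫ (shiftFunctorZero D ℤ).app X'
end Main

end CYProofAux

open CYProofAux

/-- A triangle functor between `d`-Calabi-Yau triangulated categories taking a
`d`-cluster tilting subcategory `T` into `T'` is an equivalence iff its restriction
`T → T'` is an equivalence. -/
theorem stmt0 (k : Type u) [Field k] (d : ℤ) (hd : 2 ≤ d)
    (C C' : Type u) [Category.{v} C] [Category.{v} C']
    [Preadditive C] [Preadditive C']
    [Linear k C] [Linear k C']
    [HasShift C ℤ] [HasShift C' ℤ]
    [∀ n : ℤ, (shiftFunctor C n).Additive] [∀ n : ℤ, (shiftFunctor C' n).Additive]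
    [HasZeroObject C] [HasZeroObject C']
    [Pretriangulated C] [Pretriangulated C']
    (cy : CalabiYau k C d) (cy' : CalabiYau k C' d)
    (T : Set C) (T' : Set C')
    (hT : IsClusterTilting C d T) (hT' : IsClusterTilting C' d T')
    (F : C ⥤ C') [F.CommShift ℤ] [F.IsTriangulated]
    (hF : ∀ X, X ∈ T → F.obj X ∈ T') :
    F.IsEquivalence ↔
      (ObjectProperty.lift (· ∈ T')
        (ObjectProperty.ι (· ∈ T) ⋙ F) (fun X => hF X.1 X.2)).IsEquivalence := by
  set L := ObjectProperty.lift (· ∈ T')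
    (ObjectProperty.ι (· ∈ T) ⋙ F) (fun X => hF X.1 X.2) with hLdef
  constructor
  · -- forward direction
    intro hFE
    haveI := hFE.faithful
    haveI := hFE.full
    haveI := hFE.essSurj
    refine { faithful := ?_, full := ?_, essSurj := ?_ }
    · exact ⟨fun {X Y f g} h => ObjectProperty.hom_ext (P := _)
        (F.map_injective (show F.map f.hom = F.map g.hom from congrArg (·.hom) h))⟩
    · exact ⟨fun {X Y} u => ⟨ObjectProperty.homMk (P := _) (F.preimage (show F.obj X.obj ⟶ F.obj Y.obj from u.hom)),
        ObjectProperty.hom_ext (P := _) (F.map_preimage (show F.obj X.obj ⟶ F.obj Y.obj from u.hom))⟩⟩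
    · constructor
      intro Y'
      set X₀ := F.objPreimage Y'.obj with hX₀def
      have e : F.obj X₀ ≅ Y'.obj := F.objObjPreimageIso Y'.obj
      have hX₀ : X₀ ∈ T := by
        apply (hT.mem_iff _).2
        intro t ht i h1 h2 f
        have hz := (hT'.mem_iff _).1 Y'.2 (F.obj t) (hF t ht) i h1 h2
        have h0 : F.map f ≫ ((F.commShiftIso i).hom.app X₀ ≫
            (shiftFunctor C' i).map e.hom) = 0 := hz _
        have hmf : F.map f = 0 := by
          rw [← cancel_mono ((F.commShiftIso i).hom.app X₀ ≫ (shiftFunctor C' i).map e.hom),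
            zero_comp]
          exact h0
        apply F.map_injective
        rw [F.map_zero]
        exact hmf
      exact ⟨⟨X₀, hX₀⟩, ⟨ObjectProperty.isoMk (P := _) e⟩⟩
  · -- backward direction
    intro hLE
    haveI := hLE.faithful
    haveI := hLE.full
    haveI := hLE.essSurj
    have hbase : ∀ t ∈ T, ∀ t' ∈ T, Bij F t t' := by
      intro t ht t' ht'
      constructor
      · intro f g hfg
        have h' : L.map (X := ⟨t, ht⟩) (Y := ⟨t', ht'⟩) (ObjectProperty.homMk (P := _) f) =
            L.map (ObjectProperty.homMk (P := _) g) := ObjectProperty.hom_ext (P := _) hfg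
        exact congrArg (·.hom) (L.map_injective h')
      · intro u
        obtain ⟨f, hf⟩ := L.map_surjective (X := ⟨t, ht⟩) (Y := ⟨t', ht'⟩)
          (show L.obj ⟨t, ht⟩ ⟶ L.obj ⟨t', ht'⟩ from ObjectProperty.homMk (P := _) u)
        exact ⟨f.hom, congrArg (·.hom) hf⟩
    have hFF : ∀ X Y : C, Bij F X Y := fun X Y =>
      bij_all F hT hT' hd (fun X hX => hF X hX) hbase (d-1).toNat X (tower_total hT hd X) Y
    haveI hFaith : F.Faithful := ⟨fun {X Y f g} h => (hFF X Y).1 h⟩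
    haveI hFull : F.Full := ⟨fun {X Y} u => (hFF X Y).2 u⟩
    have hb : ∀ X' ∈ T', ∃ W : C, Nonempty (F.obj W ≅ X') := by
      intro X' hX'
      exact ⟨(L.objPreimage ⟨X', hX'⟩).obj,
        ⟨(ObjectProperty.ι (· ∈ T')).mapIso (L.objObjPreimageIso ⟨X', hX'⟩)⟩⟩
    haveI : F.EssSurj := by
      constructor
      intro X'
      obtain ⟨W, ⟨e⟩⟩ := ess_surj_aux F hd hb (d-1).toNat X' (tower_total hT' hd X')
      exact ⟨W, ⟨e⟩⟩
    exact { }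
end

section
/- Let d ≥ 2, C a d-Calabi-Yau triangulated category with d-cluster tilting subcategory T satisfying Hom(T, S^{-i}T') = 0 for 1 ≤ i ≤ d−2, and Y = S^d T for some T ∈ T. Construct triangles Z_0 → T_0 → Y, Z_i → T_i → Z_{i−1} (1 ≤ i ≤ d−2) where each T_i → Z_{i−1} is a right T-approximation. Then Z_{d−2} ∈ T, and the induced complex 0 → F Z_{d−2} → F T_{d−2} → ... → F T_0 → F Y → 0 is exact in mod T, where F = Hom_C(−,?)|_T, giving a projective resolution of F Y of length ≤ d−1. -/
open CategoryTheory Limits Pretriangulated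

universe v u

private lemma zero_of_shift_shift {C : Type u} [Category.{v} C] [Preadditive C] [HasShift C ℤ]
    {A B : C} (p q r : ℤ) (hpq : p + q = r)
    (H : ∀ g : A ⟶ B⟦r⟧, g = 0) (f : A ⟶ (B⟦p⟧)⟦q⟧) : f = 0 := by
  have hf : f ≫ (shiftFunctorAdd' C p q r hpq).inv.app B = 0 := H _
  have h2 : f = (f ≫ (shiftFunctorAdd' C p q r hpq).inv.app B) ≫
      (shiftFunctorAdd' C p q r hpq).hom.app B := by
    rw [Category.assoc, Iso.inv_hom_id_app]; exact (Category.comp_id f).symm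
  rw [h2, hf, zero_comp]

/-- (Statement 8.)  In a `d`-Calabi-Yau triangulated category with a `d`-cluster tilting
subcategory `T` whose negative self-extensions vanish in degrees `1,…,d-2`, the tower of
triangles built from right `T`-approximations of `Y = T₀⟦d⟧` terminates in an object of
`T`, and the induced complex is exact in `mod T`, i.e. applying `Hom(t,−)` for every
`t ∈ T` yields short exact sequences; this gives a projective resolution of `F Y` of
length `≤ d-1`.  Here `Z' 0 = Y`, and for each `0 ≤ i ≤ d-2` there is a distinguished
triangle `Z' (i+1) ⟶ T_i ⟶ Z' i ⟶ (Z' (i+1))⟦1⟧` with `T_i ⟶ Z' i` a right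
`T`-approximation. -/
theorem stmt8 (k : Type u) [Field k] (d : ℕ) (hd : 2 ≤ d)
    (C : Type u) [Category.{v} C]
    [Preadditive C] [Linear k C] [HasShift C ℤ]
    [∀ n : ℤ, (shiftFunctor C n).Additive] [HasZeroObject C] [Pretriangulated C]
    -- the d-Calabi-Yau property
    (cy : ∀ X Y : C, Module.Dual k (X ⟶ Y) ≃ₗ[k] (Y ⟶ X⟦(d : ℤ)⟧))
    (Tset : Set C) (hCT : IsClusterTilting C (d : ℤ) Tset)
    -- vanishing of negative extensions: Hom(t, t'⟦-i⟧) = 0 for 1 ≤ i ≤ d-2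
    (hvan : ∀ t ∈ Tset, ∀ t' ∈ Tset, ∀ i : ℤ, 1 ≤ i → i ≤ (d : ℤ) - 2 →
      ∀ f : t ⟶ t'⟦-i⟧, f = 0)
    (T₀ : C) (hT₀ : T₀ ∈ Tset)
    (Z' : ℕ → C) (Tt : ℕ → C)
    (hZ0 : Z' 0 = T₀⟦(d : ℤ)⟧)
    (a : ∀ i, Z' (i + 1) ⟶ Tt i) (b : ∀ i, Tt i ⟶ Z' i)
    (h : ∀ i, Z' i ⟶ (Z' (i + 1))⟦(1 : ℤ)⟧)
    (hTt : ∀ i ≤ d - 2, Tt i ∈ Tset)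
    (htri : ∀ i ≤ d - 2, Triangle.mk (a i) (b i) (h i) ∈ distTriang C)
    (happrox : ∀ i ≤ d - 2, ∀ t ∈ Tset, ∀ g : t ⟶ Z' i, ∃ u : t ⟶ Tt i, u ≫ b i = g) :
    Z' (d - 2 + 1) ∈ Tset ∧
    ∀ t ∈ Tset, ∀ i ≤ d - 2,
      Function.Injective (fun f : t ⟶ Z' (i + 1) => f ≫ a i) ∧
      Function.Surjective (fun f : t ⟶ Tt i => f ≫ b i) ∧
      Function.Exact (fun f : t ⟶ Z' (i + 1) => f ≫ a i)
        (fun f : t ⟶ Tt i => f ≫ b i) := by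
  -- vanishing of negative shifts: Hom(t, Z' i ⟦-j⟧) = 0 for 1 ≤ j, j + i ≤ d - 1
  have L : ∀ (i : ℕ), i + 1 ≤ d → ∀ t ∈ Tset, ∀ j : ℤ, 1 ≤ j → j + i ≤ (d : ℤ) - 1 →
      ∀ f : t ⟶ (Z' i)⟦(-j : ℤ)⟧, f = 0 := by
    intro i
    induction i with
    | zero =>
      intro _ t ht j hj1 hj2 f
      revert f
      rw [hZ0]
      intro f
      refine zero_of_shift_shift (d : ℤ) (-j) ((d : ℤ) - j) (by ring)
        ((hCT.mem_iff T₀).mp hT₀ t ht ((d : ℤ) - j) (by push_cast at hj2 ⊢; omega)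
          (by omega)) f
    | succ n ih =>
      intro hn t ht j hj1 hj2 f
      have hn2 : n ≤ d - 2 := by omega
      have hTr := htri n hn2
      have hS := Pretriangulated.Triangle.shift_distinguished _ hTr (-j)
      have hS' : (Triangle.shiftFunctor C (-j)).obj (Triangle.mk (a n) (b n) (h n)) ∈
          distTriang C := hS
      set S := (Triangle.shiftFunctor C (-j)).obj (Triangle.mk (a n) (b n) (h n)) with hSdef
      have hf1 : (f : t ⟶ S.obj₁) ≫ S.mor₁ = 0 :=
        hvan t ht (Tt n) (hTt n hn2) j hj1 (by push_cast at hj2 ⊢; omega) _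
      obtain ⟨g, hg⟩ := Triangle.coyoneda_exact₂ _ (inv_rot_of_distTriang _ hS')
        (f : t ⟶ S.invRotate.obj₂) hf1
      have hg0 : g = 0 := by
        refine zero_of_shift_shift (-j) (-1) (-(j + 1)) (by ring)
          (ih (by omega) t ht (j + 1) (by omega) (by push_cast at hj2 ⊢; omega)) g
      rw [show f = g ≫ S.invRotate.mor₁ from hg, hg0, zero_comp]; rfl
  -- vanishing of positive shifts: Hom(t, Z' i ⟦m⟧) = 0 for 1 ≤ m ≤ i
  have R : ∀ (i : ℕ), i ≤ d - 1 → ∀ t ∈ Tset, ∀ m : ℤ, 1 ≤ m → m ≤ (i : ℤ) →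
      ∀ f : t ⟶ (Z' i)⟦m⟧, f = 0 := by
    intro i
    induction i with
    | zero => intro _ t ht m hm1 hm2 f; exact absurd (hm1.trans hm2) (by norm_num)
    | succ n ih =>
      intro hn t ht m hm1 hm2 f
      have hn2 : n ≤ d - 2 := by omega
      have hTr := htri n hn2
      have hmemT : ∀ K : ℤ, 1 ≤ K → K ≤ (d : ℤ) - 1 → ∀ g : t ⟶ (Tt n)⟦K⟧, g = 0 :=
        (hCT.mem_iff _).mp (hTt n hn2) t ht
      by_cases hm : m = 1
      · subst hm
        have hrot := rot_of_distTriang _ hTr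
        have hf3 : (f : t ⟶ (Triangle.mk (a n) (b n) (h n)).rotate.obj₃) ≫
            (Triangle.mk (a n) (b n) (h n)).rotate.mor₃ = 0 :=
          hmemT 1 le_rfl (by push_cast; omega) _
        obtain ⟨g, hg⟩ := Triangle.coyoneda_exact₃ _ hrot
          (f : t ⟶ (Triangle.mk (a n) (b n) (h n)).rotate.obj₃) hf3
        obtain ⟨u, hu⟩ := happrox n hn2 t ht g
        have hbh : b n ≫ h n = 0 := comp_distTriang_mor_zero₂₃ _ hTr
        calc f = g ≫ h n := hg
        _ = (u ≫ b n) ≫ h n := by rw [hu]; rfl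
        _ = u ≫ (b n ≫ h n) := Category.assoc _ _ _
        _ = 0 := by rw [hbh, comp_zero]
      · -- m ≥ 2
        have hS := Pretriangulated.Triangle.shift_distinguished _ hTr m
        have hS' : (Triangle.shiftFunctor C m).obj (Triangle.mk (a n) (b n) (h n)) ∈
            distTriang C := hS
        set S := (Triangle.shiftFunctor C m).obj (Triangle.mk (a n) (b n) (h n)) with hSdef
        have hf1 : (f : t ⟶ S.obj₁) ≫ S.mor₁ = 0 :=
          hmemT m hm1 (by push_cast at hm2 ⊢; omega) _
        obtain ⟨g, hg⟩ := Triangle.coyoneda_exact₂ _ (inv_rot_of_distTriang _ hS')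
          (f : t ⟶ S.invRotate.obj₂) hf1
        have hg0 : g = 0 := by
          refine zero_of_shift_shift m (-1) (m - 1) (by ring)
            (ih (by omega) t ht (m - 1) (by omega) (by push_cast at hm2 ⊢; omega)) g
        rw [show f = g ≫ S.invRotate.mor₁ from hg, hg0, zero_comp]; rfl
  constructor
  · rw [hCT.mem_iff]
    intro t ht m hm1 hm2 f
    exact R (d - 2 + 1) (by omega) t ht m hm1 (by push_cast at hm2 ⊢; omega) f
  · intro t ht i hi
    have hTr := htri i hi
    refine ⟨?_, ?_, ?_⟩
    · intro f₁ f₂ hf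
      have hf' : f₁ ≫ a i = f₂ ≫ a i := hf
      have h0 : (f₁ - f₂) ≫ a i = 0 := by rw [Preadditive.sub_comp, hf', sub_self]
      obtain ⟨g, hg⟩ := Triangle.coyoneda_exact₂ _ (inv_rot_of_distTriang _ hTr)
        ((f₁ - f₂) : t ⟶ (Triangle.mk (a i) (b i) (h i)).invRotate.obj₂) h0
      have hg0 : g = 0 := L i (by omega) t ht 1 le_rfl (by push_cast; omega) g
      have : f₁ - f₂ = 0 := by
        rw [show f₁ - f₂ = g ≫ (Triangle.mk (a i) (b i) (h i)).invRotate.mor₁ from hg,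
          hg0, zero_comp]; rfl
      exact sub_eq_zero.mp this
    · intro g
      obtain ⟨u, hu⟩ := happrox i hi t ht g
      exact ⟨u, hu⟩
    · intro y
      constructor
      · intro hy
        obtain ⟨g, hg⟩ := Triangle.coyoneda_exact₂ _ hTr
          (y : t ⟶ (Triangle.mk (a i) (b i) (h i)).obj₂) hy
        exact ⟨g, hg.symm⟩
      · rintro ⟨x, rfl⟩
        show (x ≫ a i) ≫ b i = 0
        have h12 : a i ≫ b i = 0 := comp_distTriang_mor_zero₁₂ _ hTr
        rw [Category.assoc, h12, comp_zero]
end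

section
/- Let C be a 2-Calabi-Yau Hom-finite algebraic triangulated category with cluster tilting subcategory T such that mod T is hereditary, and let F : C → C_T be the triangle functor constructed via the stable derived category of T ⊕ DT[-3]. If F restricts to an equivalence T → add π(T) and induces bijections C(T, T'[i]) → C_T(FT, FT'[i]) for all T, T' ∈ T and i ∈ {0,1}, then F is fully faithful, hence an equivalence C ≃ C_T. -/
open CategoryTheory Limits Pretriangulated

universe v u

/-- (Statement 10.)  Let `C` be a 2-Calabi-Yau Hom-finite algebraic triangulated
category with cluster tilting subcategory `T` (so every object sits in a triangle
`t₁ → t₀ → X → t₁⟦1⟧` with `t₀, t₁ ∈ T`), and let `F : C ⥤ D` be the triangle functor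
to the cluster category `D = C_T` (whose objects `F t`, `t ∈ T`, form a cluster tilting
subcategory, so every object of `D` sits in a corresponding triangle).  If `F` induces
bijections `C(t, t'⟦i⟧) → D(F t, (F t')⟦i⟧)` for all `t, t' ∈ T` and `i ∈ {0, 1}`, then
`F` is fully faithful, hence an equivalence `C ≃ C_T`. -/
theorem stmt10 (k : Type u) [Field k]
    (C D : Type u) [Category.{v} C] [Category.{v} D]
    [Preadditive C] [Preadditive D] [Linear k C] [Linear k D]
    [HasShift C ℤ] [HasShift D ℤ]
    [∀ n : ℤ, (shiftFunctor C n).Additive] [∀ n : ℤ, (shiftFunctor D n).Additive]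
    [HasZeroObject C] [HasZeroObject D]
    [Pretriangulated C] [Pretriangulated D]
    [∀ X Y : C, FiniteDimensional k (X ⟶ Y)] [∀ X Y : D, FiniteDimensional k (X ⟶ Y)]
    -- the 2-Calabi-Yau property of C
    (cy : ∀ X Y : C, Module.Dual k (X ⟶ Y) ≃ₗ[k] (Y ⟶ X⟦(2 : ℤ)⟧))
    (T : Set C) (hCT : IsClusterTilting C 2 T)
    (F : C ⥤ D) [F.CommShift ℤ] [F.IsTriangulated]
    -- every object of C sits in a triangle with outer terms in T
    (htriC : ∀ X : C, ∃ t₁, t₁ ∈ T ∧ ∃ t₀, t₀ ∈ T ∧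
      ∃ (u : t₁ ⟶ t₀) (v : t₀ ⟶ X) (w : X ⟶ t₁⟦(1 : ℤ)⟧),
        Triangle.mk u v w ∈ distTriang C)
    -- the images F t, t ∈ T, form a cluster tilting subcategory of the cluster
    -- category D = C_T; in particular they generate: every object of D sits in a
    -- triangle with outer terms of the form F t
    (htriD : ∀ Y : D, ∃ t₁, t₁ ∈ T ∧ ∃ t₀, t₀ ∈ T ∧
      ∃ (u : F.obj t₁ ⟶ F.obj t₀) (v : F.obj t₀ ⟶ Y) (w : Y ⟶ (F.obj t₁)⟦(1 : ℤ)⟧),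
        Triangle.mk u v w ∈ distTriang D)
    -- F restricts to an equivalence from T onto its image: bijectivity in degree 0
    (hbij0 : ∀ t, t ∈ T → ∀ t', t' ∈ T →
      Function.Bijective (fun f : t ⟶ t' => F.map f))
    -- bijectivity in degree 1
    (hbij1 : ∀ t, t ∈ T → ∀ t', t' ∈ T →
      Function.Bijective (fun f : t ⟶ t'⟦(1 : ℤ)⟧ =>
        F.map f ≫ (F.commShiftIso (1 : ℤ)).hom.app t')) :
    F.Full ∧ F.Faithful ∧ F.IsEquivalence := by

  classical
  -- `F` is additive since it is triangulated
  have hAdd : F.Additive := inferInstance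
  -- Step A: `F` is bijective on morphisms `t ⟶ X` for `t ∈ T` and arbitrary `X`.
  have hA : ∀ t, t ∈ T → ∀ X : C,
      Function.Bijective (fun f : t ⟶ X => F.map f) := by
    intro t ht X
    obtain ⟨t₁, ht₁, t₀, ht₀, u, v, w, hTri⟩ := htriC X
    have hFTri : Triangle.mk (F.map u) (F.map v) (F.map w ≫ (F.commShiftIso (1 : ℤ)).hom.app t₁)
        ∈ distTriang D := F.map_distinguished _ hTri
    have huv : u ≫ v = 0 := comp_distTriang_mor_zero₁₂ _ hTri
    constructor
    · -- injectivity
      intro f g hfg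
      rw [← sub_eq_zero, ← F.map_sub] at hfg
      rw [← sub_eq_zero]
      set d := f - g with hd
      clear_value d
      have h1 : d ≫ w = 0 := by
        apply (hbij1 t ht t₁ ht₁).1
        show F.map (d ≫ w) ≫ _ = F.map 0 ≫ _
        rw [F.map_zero, zero_comp, F.map_comp, hfg, zero_comp, zero_comp]
      obtain ⟨g', hg'⟩ : ∃ g' : t ⟶ t₀, d = g' ≫ v := Triangle.coyoneda_exact₃ _ hTri d h1
      have hg2 : d = g' ≫ v := hg'
      have h2 : F.map g' ≫ F.map v = 0 := by
        rw [← F.map_comp, ← hg2, hfg]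
      obtain ⟨h', hh'⟩ := Triangle.coyoneda_exact₂ _ hFTri (F.map g')
        h2
      obtain ⟨h, hh⟩ := (hbij0 t ht t₁ ht₁).2 h'
      simp only at hh
      have hgu : g' = h ≫ u := by
        apply (hbij0 t ht t₀ ht₀).1
        show F.map g' = F.map (h ≫ u)
        rw [F.map_comp, hh]
        exact hh'
      rw [hg', hgu]
      show (h ≫ u) ≫ v = 0
      rw [Category.assoc, huv, comp_zero]
    · -- surjectivity
      intro φ
      obtain ⟨α, hα⟩ := (hbij1 t ht t₁ ht₁).2
        (φ ≫ F.map w ≫ (F.commShiftIso (1 : ℤ)).hom.app t₁)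
      simp only at hα
      have hα0 : α ≫ u⟦(1 : ℤ)⟧' = 0 := by
        apply (hbij1 t ht t₀ ht₀).1
        show F.map (α ≫ u⟦(1 : ℤ)⟧') ≫ _ = F.map 0 ≫ _
        rw [F.map_zero, zero_comp, F.map_comp, Category.assoc,
          F.commShiftIso_hom_naturality, reassoc_of% hα]
        have h0 : F.map w ≫ (F.commShiftIso (1 : ℤ)).hom.app t₁ ≫
            (F.map u)⟦(1 : ℤ)⟧' = 0 := by
          exact (Category.assoc _ _ _).symm.trans (comp_distTriang_mor_zero₃₁ _ hFTri)
        rw [h0, comp_zero]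
      obtain ⟨β₀, hβ⟩ := Triangle.coyoneda_exact₁ _ hTri α hα0
      let β : t ⟶ X := β₀
      have hβ2 : α = β ≫ w := hβ
      have h4 : (φ - F.map β) ≫ (F.map w ≫ (F.commShiftIso (1 : ℤ)).hom.app t₁) = 0 := by
        have hβw : F.map β ≫ F.map w ≫ (F.commShiftIso (1 : ℤ)).hom.app t₁ =
            φ ≫ F.map w ≫ (F.commShiftIso (1 : ℤ)).hom.app t₁ := by
          rw [← F.map_comp_assoc, ← hβ2]
          exact hα
        simp [Preadditive.sub_comp, hβw]
      set σ : F.obj t ⟶ F.obj X := φ - F.map β with hσ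
      obtain ⟨ψ, hψ⟩ : ∃ ψ : F.obj t ⟶ F.obj t₀, σ = ψ ≫ F.map v := Triangle.coyoneda_exact₃ _ hFTri σ h4
      obtain ⟨γ, hγ⟩ := (hbij0 t ht t₀ ht₀).2 ψ
      simp only at hγ
      refine ⟨β + γ ≫ v, ?_⟩
      show F.map (β + γ ≫ v) = φ
      rw [F.map_add, F.map_comp, hγ]
      have : φ - F.map β = ψ ≫ F.map v := hσ ▸ hψ
      rw [← this]
      abel
  -- Step A': bijectivity on morphisms `t⟦1⟧ ⟶ X`.
  have hA1 : ∀ t, t ∈ T → ∀ X : C,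
      Function.Bijective (fun f : (t⟦(1 : ℤ)⟧ : C) ⟶ X => F.map f) := by
    intro t ht X
    set E := shiftEquiv C (1 : ℤ) with hE
    -- the bijection `(t⟦1⟧ ⟶ X) ≃ (t ⟶ X⟦-1⟧)`
    set Φ : ((t⟦(1 : ℤ)⟧ : C) ⟶ X) → (t ⟶ (X⟦(-1 : ℤ)⟧ : C)) :=
      fun f => E.unit.app t ≫ f⟦(-1 : ℤ)⟧' with hΦdef
    have hΦ : Function.Bijective Φ := by
      have : Φ = fun f => (E.toAdjunction.homEquiv t X) f := by
        funext f
        rfl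
      rw [this]
      exact (E.toAdjunction.homEquiv t X).bijective
    -- conjugating map in `D`
    set K : (F.obj (t⟦(1 : ℤ)⟧) ⟶ F.obj X) → (F.obj t ⟶ F.obj (X⟦(-1 : ℤ)⟧)) :=
      fun φ => F.map (E.unit.app t) ≫ (F.commShiftIso (-1 : ℤ)).hom.app (t⟦(1 : ℤ)⟧) ≫
        φ⟦(-1 : ℤ)⟧' ≫ (F.commShiftIso (-1 : ℤ)).inv.app X with hKdef
    have hKinj : Function.Injective K := by
      intro φ₁ φ₂ h
      simp only [hKdef] at h
      have h1 : IsIso (F.map (E.unit.app t)) := by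
        have : IsIso (E.unit.app t) := inferInstance
        infer_instance
      have h2 := (cancel_epi (F.map (E.unit.app t))).1 h
      have h3 := (cancel_epi ((F.commShiftIso (-1 : ℤ)).hom.app (t⟦(1 : ℤ)⟧))).1 h2
      have h4 := (cancel_mono ((F.commShiftIso (-1 : ℤ)).inv.app X)).1 h3
      exact (shiftFunctor D (-1 : ℤ)).map_injective h4
    have hkey : ∀ f : (t⟦(1 : ℤ)⟧ : C) ⟶ X, F.map (Φ f) = K (F.map f) := by
      intro f
      have hnat : F.map (f⟦(-1 : ℤ)⟧') =
          (F.commShiftIso (-1 : ℤ)).hom.app (t⟦(1 : ℤ)⟧) ≫ (F.map f)⟦(-1 : ℤ)⟧' ≫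
            (F.commShiftIso (-1 : ℤ)).inv.app X := by
        rw [← cancel_mono ((F.commShiftIso (-1 : ℤ)).hom.app X)]
        simp [F.commShiftIso_hom_naturality]
      simp only [hΦdef, hKdef]
      exact (F.map_comp (E.unit.app t) (f⟦(-1 : ℤ)⟧')).trans
        (congrArg (fun x => F.map (E.unit.app t) ≫ x) hnat)
    constructor
    · intro f g h
      apply hΦ.1
      apply (hA t ht _).1
      show F.map (Φ f) = F.map (Φ g)
      rw [hkey, hkey]
      exact congrArg K h
    · intro φ
      obtain ⟨g, hg⟩ := (hA t ht (X⟦(-1 : ℤ)⟧)).2 (K φ)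
      obtain ⟨f, hf⟩ := hΦ.2 g
      refine ⟨f, hKinj ?_⟩
      show K (F.map f) = K φ
      rw [← hkey, hf]
      exact hg
  -- Step B: `F` is bijective on all morphisms.
  have hB : ∀ X Y : C, Function.Bijective (fun f : X ⟶ Y => F.map f) := by
    intro X Y
    obtain ⟨t₁, ht₁, t₀, ht₀, u, v, w, hTri⟩ := htriC X
    have hFTri : Triangle.mk (F.map u) (F.map v) (F.map w ≫ (F.commShiftIso (1 : ℤ)).hom.app t₁)
        ∈ distTriang D := F.map_distinguished _ hTri
    have hwu : w ≫ u⟦(1 : ℤ)⟧' = 0 := comp_distTriang_mor_zero₃₁ _ hTri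
    constructor
    · -- injectivity
      intro f g hfg
      rw [← sub_eq_zero, ← F.map_sub] at hfg
      rw [← sub_eq_zero]
      set d := f - g with hd
      clear_value d
      have h1 : v ≫ d = 0 := by
        apply (hA t₀ ht₀ Y).1
        show F.map (v ≫ d) = F.map 0
        rw [F.map_zero, F.map_comp, hfg, comp_zero]
      obtain ⟨g', hg'⟩ : ∃ g' : (t₁⟦(1 : ℤ)⟧ : C) ⟶ Y, d = w ≫ g' := Triangle.yoneda_exact₃ _ hTri d h1
      have hg2 : d = w ≫ g' := hg' 
      -- hg' : d = w ≫ g'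
      have h2 : (F.map w ≫ (F.commShiftIso (1 : ℤ)).hom.app t₁) ≫
          ((F.commShiftIso (1 : ℤ)).inv.app t₁ ≫ F.map g') = 0 := by
        simp only [Category.assoc, Iso.hom_inv_id_app_assoc]
        rw [← F.map_comp, ← hg2, hfg]
      obtain ⟨h', hh'⟩ := Triangle.yoneda_exact₃ _ (rot_of_distTriang _ hFTri)
        ((F.commShiftIso (1 : ℤ)).inv.app t₁ ≫ F.map g') h2
      -- hh' : ... = (-(F.map u)⟦1⟧') ≫ h'  with h' : (F.obj t₀)⟦1⟧ ⟶ F.obj Y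
      obtain ⟨h₀, hh₀⟩ := (hA1 t₀ ht₀ Y).2 ((F.commShiftIso (1 : ℤ)).hom.app t₀ ≫ h')
      simp only at hh₀
      have hgval : g' = (-(u⟦(1 : ℤ)⟧')) ≫ h₀ := by
        apply (hA1 t₁ ht₁ Y).1
        show F.map g' = F.map ((-(u⟦(1 : ℤ)⟧')) ≫ h₀)
        rw [F.map_comp, F.map_neg, hh₀]
        have hnat : F.map (u⟦(1 : ℤ)⟧') =
            (F.commShiftIso (1 : ℤ)).hom.app t₁ ≫ (F.map u)⟦(1 : ℤ)⟧' ≫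
              (F.commShiftIso (1 : ℤ)).inv.app t₀ := by
          rw [← cancel_mono ((F.commShiftIso (1 : ℤ)).hom.app t₀)]
          simp [F.commShiftIso_hom_naturality]
        rw [← cancel_epi ((F.commShiftIso (1 : ℤ)).inv.app t₁), hnat]
        simp only [Iso.inv_hom_id_app_assoc, Preadditive.neg_comp, Preadditive.comp_neg,
          Category.assoc, Iso.inv_hom_id_app_assoc]
        exact hh'.trans ((Preadditive.neg_comp _ _).trans (congrArg Neg.neg
          (congrArg (fun x => (F.map u)⟦(1 : ℤ)⟧' ≫ x)
            (Iso.inv_hom_id_app_assoc (F.commShiftIso (1 : ℤ)) t₀ h').symm)))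
      rw [hg2, hgval]
      show w ≫ ((-(u⟦(1 : ℤ)⟧')) ≫ h₀) = 0
      rw [Preadditive.neg_comp, Preadditive.comp_neg, ← Category.assoc, hwu,
        zero_comp, neg_zero]
    · -- surjectivity
      intro φ
      obtain ⟨β, hβ⟩ := (hA t₀ ht₀ Y).2 (F.map v ≫ φ)
      simp only at hβ
      have huβ : u ≫ β = 0 := by
        apply (hA t₁ ht₁ Y).1
        show F.map (u ≫ β) = F.map 0
        have huv2 : u ≫ v = 0 := comp_distTriang_mor_zero₁₂ _ hTri
        rw [F.map_zero, F.map_comp, hβ, ← Category.assoc, ← F.map_comp, huv2,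
          F.map_zero, zero_comp]
      obtain ⟨γ₀, hγ⟩ := Triangle.yoneda_exact₂ _ hTri β huβ
      let γ : X ⟶ Y := γ₀
      have hγ2 : β = v ≫ γ := hγ
      -- hγ : β = v ≫ γ
      set σ : F.obj X ⟶ F.obj Y := φ - F.map γ with hσ
      have h5 : F.map v ≫ σ = 0 := by
        simp only [hσ]
        rw [Preadditive.comp_sub, ← F.map_comp, ← hγ2, hβ, sub_self]
      obtain ⟨δ, hδ⟩ := Triangle.yoneda_exact₃ _ hFTri σ h5
      -- hδ : φ - F.map γ = (F.map w ≫ comm) ≫ δ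
      obtain ⟨δ', hδ'⟩ := (hA1 t₁ ht₁ Y).2 ((F.commShiftIso (1 : ℤ)).hom.app t₁ ≫ δ)
      simp only at hδ'
      refine ⟨γ + w ≫ δ', ?_⟩
      show F.map (γ + w ≫ δ') = φ
      rw [F.map_add, F.map_comp, hδ']
      have : φ - F.map γ = F.map w ≫ (F.commShiftIso (1 : ℤ)).hom.app t₁ ≫ δ := by
        rw [hσ] at hδ
        exact hδ.trans (Category.assoc _ _ _)
      exact (congrArg (F.map γ + ·) this.symm).trans (by abel)
  have hFull : F.Full := ⟨fun {X Y} f => (hB X Y).2 f⟩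
  have hFaithful : F.Faithful := ⟨fun {X Y} f g h => (hB X Y).1 h⟩
  have hEssSurj : F.EssSurj := by
    constructor
    intro Y
    obtain ⟨t₁, ht₁, t₀, ht₀, u', v, w, hT⟩ := htriD Y
    obtain ⟨u, hu⟩ := (hbij0 t₁ ht₁ t₀ ht₀).2 u'
    simp only at hu
    obtain ⟨X, v', w', hT'⟩ := distinguished_cocone_triangle u
    have hFT' : Triangle.mk (F.map u) (F.map v') (F.map w' ≫ (F.commShiftIso (1 : ℤ)).hom.app t₁)
        ∈ distTriang D := F.map_distinguished _ hT'
    have iso := isoTriangleOfIso₁₂ _ _ hFT' hT (Iso.refl _) (Iso.refl _)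
      ((Category.comp_id _).trans (hu.trans (Category.id_comp _).symm))
    exact ⟨X, ⟨Triangle.π₃.mapIso iso⟩⟩
  exact ⟨hFull, hFaithful, ⟨hFaithful, hFull, hEssSurj⟩⟩
end
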